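/- arXiv:2602.06821 — 3 statements merged into one kernel-verified Lean document; each statement's English description precedes it below -/
import Mathlib

section
/- Let y : [0,∞) → ℝ be nonnegative, differentiable, and satisfy y'(t) + c·y(t)^{5/3} ≤ 0 for all t ≥ 0, where c > 0. Then for all t ≥ 0, y(t) ≤ y(0)·(1 + a·t)^{-3/2}, where a = (2/3)·c·y(0)^{2/3}. -/
open Real

theorem stmt_0 (y : ℝ → ℝ) (c : ℝ) (hc : 0 < c)
    (hdiff : Differentiable ℝ y)
    (hnn : ∀ t : ℝ, 0 ≤ t → 0 ≤ y t)
    (hineq : ∀ t : ℝ, 0 ≤ t → deriv y t + c * y t ^ ((5:ℝ)/3) ≤ 0) :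
    ∀ t : ℝ, 0 ≤ t →
      y t ≤ y 0 * (1 + ((2:ℝ)/3) * c * y 0 ^ ((2:ℝ)/3) * t) ^ (-(3:ℝ)/2) := by
  -- y is antitone on [0,∞)
  have hanti : AntitoneOn y (Set.Ici (0:ℝ)) := by
    apply antitoneOn_of_deriv_nonpos (convex_Ici 0) hdiff.continuous.continuousOn
      (hdiff.differentiableOn)
    intro x hx
    rw [interior_Ici] at hx
    have h1 := hineq x (le_of_lt hx)
    have h2 : 0 ≤ c * y x ^ ((5:ℝ)/3) :=
      mul_nonneg hc.le (Real.rpow_nonneg (hnn x hx.le) _)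
    linarith
  intro t ht
  have hbase : (0:ℝ) < 1 + ((2:ℝ)/3) * c * y 0 ^ ((2:ℝ)/3) * t := by
    have : 0 ≤ ((2:ℝ)/3) * c * y 0 ^ ((2:ℝ)/3) * t := by
      have := Real.rpow_nonneg (hnn 0 le_rfl) ((2:ℝ)/3)
      positivity
    linarith
  have hRHS : 0 ≤ y 0 * (1 + ((2:ℝ)/3) * c * y 0 ^ ((2:ℝ)/3) * t) ^ (-(3:ℝ)/2) :=
    mul_nonneg (hnn 0 le_rfl) (Real.rpow_nonneg hbase.le _)
  rcases eq_or_lt_of_le (hnn t ht) with hyt | hyt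
  · linarith
  -- now y t > 0, hence y > 0 on [0,t]
  have hpos : ∀ s ∈ Set.Icc (0:ℝ) t, 0 < y s := fun s hs =>
    lt_of_lt_of_le hyt (hanti (Set.mem_Ici.2 hs.1) (Set.mem_Ici.2 ht) hs.2)
  have hB : 0 < y 0 := hpos 0 ⟨le_rfl, ht⟩
  -- consider w s = (y s)^(-2/3) - (2/3)*c*s, monotone on [0,t]
  set w : ℝ → ℝ := fun s => y s ^ (-(2:ℝ)/3) - (2/3) * c * s with hw
  have hderiv : ∀ s ∈ Set.Icc (0:ℝ) t, HasDerivAt w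
      (deriv y s * (-(2:ℝ)/3) * y s ^ (-(2:ℝ)/3 - 1) - (2/3) * c) s := by
    intro s hs
    have hd2 : HasDerivAt (fun s : ℝ => (2/3) * c * s) ((2/3) * c) s := by
      simpa using (hasDerivAt_id s).const_mul ((2/3) * c)
    exact ((hdiff s).hasDerivAt.rpow_const (Or.inl (hpos s hs).ne')).sub hd2
  have hmono : MonotoneOn w (Set.Icc (0:ℝ) t) := by
    apply monotoneOn_of_deriv_nonneg (convex_Icc 0 t)
    · intro s hs
      exact (hderiv s hs).continuousAt.continuousWithinAt
    · intro s hs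
      rw [interior_Icc] at hs
      exact ((hderiv s ⟨hs.1.le, hs.2.le⟩).differentiableAt).differentiableWithinAt
    · intro s hs
      rw [interior_Icc] at hs
      have hs' : s ∈ Set.Icc (0:ℝ) t := ⟨hs.1.le, hs.2.le⟩
      rw [(hderiv s hs').deriv]
      have hys : 0 < y s := hpos s hs'
      have h1 : deriv y s ≤ -(c * y s ^ ((5:ℝ)/3)) := by
        have := hineq s hs.1.le
        linarith
      have hpow : 0 < y s ^ (-(2:ℝ)/3 - 1) := Real.rpow_pos_of_pos hys _
      have key : y s ^ ((5:ℝ)/3) * y s ^ (-(2:ℝ)/3 - 1) = 1 := by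
        rw [← Real.rpow_add hys]
        norm_num
      have h2 : deriv y s * (-(2:ℝ)/3) * y s ^ (-(2:ℝ)/3 - 1)
          ≥ (-(c * y s ^ ((5:ℝ)/3))) * (-(2:ℝ)/3) * y s ^ (-(2:ℝ)/3 - 1) := by
        have hm : 0 ≤ (-(2:ℝ)/3) * y s ^ (-(2:ℝ)/3 - 1) * (-1) := by
          nlinarith
        nlinarith [mul_le_mul_of_nonneg_right h1 hpow.le]
      have h3 : (-(c * y s ^ ((5:ℝ)/3))) * (-(2:ℝ)/3) * y s ^ (-(2:ℝ)/3 - 1)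
          = (2/3) * c := by
        have : c * (y s ^ ((5:ℝ)/3) * y s ^ (-(2:ℝ)/3 - 1)) = c := by rw [key]; ring
        nlinarith [this]
      linarith
  have hkey : y 0 ^ (-(2:ℝ)/3) + (2/3) * c * t ≤ y t ^ (-(2:ℝ)/3) := by
    have := hmono ⟨le_rfl, ht⟩ ⟨ht, le_rfl⟩ ht
    simp only [hw] at this
    linarith
  -- Set A := y 0 ^ (-2/3) + (2/3) c t
  have hApos : 0 < y 0 ^ (-(2:ℝ)/3) + (2/3) * c * t := by
    have h1 : 0 < y 0 ^ (-(2:ℝ)/3) := Real.rpow_pos_of_pos hB _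
    have h2 : 0 ≤ (2/3) * c * t := by positivity
    linarith
  -- p := y t ≤ A ^ (-3/2)
  have hstep1 : y t ≤ (y 0 ^ (-(2:ℝ)/3) + (2/3) * c * t) ^ (-(3:ℝ)/2) := by
    have h1 : (y t ^ (-(2:ℝ)/3)) ^ (-(3:ℝ)/2) ≤ (y 0 ^ (-(2:ℝ)/3) + (2/3) * c * t) ^ (-(3:ℝ)/2) :=
      Real.rpow_le_rpow_of_nonpos hApos hkey (by norm_num)
    have h2 : (y t ^ (-(2:ℝ)/3)) ^ (-(3:ℝ)/2) = y t := by
      rw [← Real.rpow_mul hyt.le]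
      norm_num
    linarith
  -- A ^ (-3/2) = B * (1 + (2/3) c B^(2/3) t)^(-3/2)
  have hstep2 : (y 0 ^ (-(2:ℝ)/3) + (2/3) * c * t) ^ (-(3:ℝ)/2)
      = y 0 * (1 + ((2:ℝ)/3) * c * y 0 ^ ((2:ℝ)/3) * t) ^ (-(3:ℝ)/2) := by
    have hAeq : y 0 ^ (-(2:ℝ)/3) + (2/3) * c * t
        = y 0 ^ (-(2:ℝ)/3) * (1 + ((2:ℝ)/3) * c * y 0 ^ ((2:ℝ)/3) * t) := by
      have hmul : y 0 ^ (-(2:ℝ)/3) * y 0 ^ ((2:ℝ)/3) = 1 := by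
        rw [← Real.rpow_add hB]; norm_num
      linear_combination (-(2:ℝ)/3 * c * t) * hmul
    rw [hAeq, Real.mul_rpow (Real.rpow_pos_of_pos hB _).le hbase.le]
    congr 1
    rw [← Real.rpow_mul hB.le]
    norm_num
  linarith [hstep2 ▸ hstep1]
end

section
/- (Lorentz interpolation inequality) There is a constant C > 0 such that for every z in the Schwartz space on ℝ³, ‖z‖_{L^{3,1}(ℝ³)}² ≤ C·‖z‖_{L²(ℝ³)}·‖∇z‖_{L²(ℝ³)}, where L^{3,1} = [L², L⁶]_{1/2,1} is the Lorentz space obtained by real interpolation. -/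
/-!
Split the layer-cake integral defining `‖z‖_{L^{3,1}}` at a level `l₀`: below `l₀` bound the
distribution function by Chebyshev's inequality in `L²`, above `l₀` by Chebyshev's inequality
in `L⁶`. Optimizing `l₀` gives `‖z‖_{L^{3,1}}² ≤ 144 ‖z‖₂ ‖z‖₆`. The Gagliardo–Nirenberg–Sobolev
inequality `‖z‖₆ ≤ K ‖∇z‖₂`, available for compactly supported `C¹` functions, extends to
Schwartz functions `z` through the truncations `ψ(x / R) z(x)`: their gradients exceed `∇z` by
`O(‖z‖₂ / R)` in `L²`, and Fatou's lemma lets `R → ∞`.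
-/

open MeasureTheory
open scoped ENNReal

/-- The Lorentz `L^{3,1}` norm on `ℝ³`, via the layer-cake formula
`‖f‖_{L^{3,1}} = 3 ∫₀^∞ (μ {|f| > λ})^{1/3} dλ`. -/
noncomputable def lorentz31 (f : EuclideanSpace ℝ (Fin 3) → ℝ) : ℝ≥0∞ :=
  3 * ∫⁻ l in Set.Ioi (0:ℝ), (volume {x | l < |f x|}) ^ ((1:ℝ)/3)

open Set Filter Topology
open scoped NNReal SchwartzMap

lemma lintegral_Ioc_zero_ofReal_rpow {r : ℝ} (hr : -1 < r) {b : ℝ} (hb : 0 ≤ b) :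
    ∫⁻ l in Ioc 0 b, ENNReal.ofReal (l ^ r) = ENNReal.ofReal (b ^ (r + 1) / (r + 1)) := by
  rw [← ofReal_integral_eq_lintegral_ofReal, ← intervalIntegral.integral_of_le hb,
    integral_rpow (Or.inl hr), Real.zero_rpow (by linarith), sub_zero]
  · rw [← IntegrableOn, ← intervalIntegrable_iff_integrableOn_Ioc_of_le hb]
    exact intervalIntegral.intervalIntegrable_rpow' hr
  · filter_upwards [ae_restrict_mem measurableSet_Ioc] with l hl
    exact Real.rpow_nonneg hl.1.le _

lemma lintegral_Ioi_ofReal_rpow {r : ℝ} (hr : r < -1) {b : ℝ} (hb : 0 < b) :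
    ∫⁻ l in Ioi b, ENNReal.ofReal (l ^ r) = ENNReal.ofReal (-b ^ (r + 1) / (r + 1)) := by
  rw [← ofReal_integral_eq_lintegral_ofReal, integral_Ioi_rpow_of_lt hr hb]
  · exact integrableOn_Ioi_rpow_of_lt hr hb
  · filter_upwards [ae_restrict_mem measurableSet_Ioi] with l hl
    exact Real.rpow_nonneg (hb.trans hl).le _

lemma rpow_le_ofReal_mul_rpow_of_le_div_rpow {ν : ℝ≥0∞} {a l p r : ℝ} (ha : 0 ≤ a) (hl : 0 < l)
    (hr : 0 ≤ r) (h : ν ≤ ENNReal.ofReal ((a / l) ^ p)) :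
    ν ^ r ≤ ENNReal.ofReal (a ^ (p * r)) * ENNReal.ofReal (l ^ (-(p * r))) := by
  calc ν ^ r ≤ ENNReal.ofReal ((a / l) ^ p) ^ r := ENNReal.rpow_le_rpow h hr
    _ = _ := by
      rw [ENNReal.ofReal_rpow_of_nonneg (by positivity) hr, ← Real.rpow_mul (by positivity),
        Real.div_rpow ha hl.le, Real.rpow_neg hl.le, div_eq_mul_inv,
        ENNReal.ofReal_mul (by positivity)]

lemma lintegral_Ioi_rpow_one_third_le {ν : ℝ → ℝ≥0∞} {a s : ℝ} (ha : 0 ≤ a) (hs : 0 ≤ s)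
    (h2 : ∀ l > 0, ν l ≤ ENNReal.ofReal ((a / l) ^ (2 : ℝ)))
    (h6 : ∀ l > 0, ν l ≤ ENNReal.ofReal ((s / l) ^ (6 : ℝ))) :
    ∫⁻ l in Ioi 0, ν l ^ (1 / 3 : ℝ) ≤ ENNReal.ofReal (4 * √(a * s)) := by
  have of_null : (∀ l > 0, ν l = 0) →
      ∫⁻ l in Ioi 0, ν l ^ (1 / 3 : ℝ) ≤ ENNReal.ofReal (4 * √(a * s)) := fun h => by
    rw [setLIntegral_congr_fun measurableSet_Ioi fun l hl => by
      rw [h l hl, ENNReal.zero_rpow_of_pos (by norm_num)], lintegral_zero]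
    exact zero_le
  rcases ha.eq_or_lt with rfl | ha
  · exact of_null fun l hl => by simpa using h2 l hl
  rcases hs.eq_or_lt with rfl | hs
  · exact of_null fun l hl => by simpa using h6 l hl
  -- `l₀` balances the two bounds: `a ^ (2/3) * l₀ ^ (-2/3) = s ^ 2 * l₀ ^ (-2)`.
  set l₀ := s ^ (3 / 2 : ℝ) * a ^ (-1 / 2 : ℝ) with hl₀
  have hl₀_pos : 0 < l₀ := by positivity
  have below : ∫⁻ l in Ioc 0 l₀, ν l ^ (1 / 3 : ℝ) ≤
      ENNReal.ofReal (3 * (a ^ (2 / 3 : ℝ) * l₀ ^ (1 / 3 : ℝ))) := by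
    calc ∫⁻ l in Ioc 0 l₀, ν l ^ (1 / 3 : ℝ)
        ≤ ∫⁻ l in Ioc 0 l₀,
            ENNReal.ofReal (a ^ (2 / 3 : ℝ)) * ENNReal.ofReal (l ^ (-2 / 3 : ℝ)) :=
          setLIntegral_mono' measurableSet_Ioc fun l hl =>
            (rpow_le_ofReal_mul_rpow_of_le_div_rpow ha.le hl.1 (by norm_num) (h2 l hl.1)).trans_eq
              (by norm_num)
      _ = ENNReal.ofReal (a ^ (2 / 3 : ℝ)) * ENNReal.ofReal (l₀ ^ (1 / 3 : ℝ) / (1 / 3)) := by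
          rw [lintegral_const_mul' _ _ ENNReal.ofReal_ne_top,
            lintegral_Ioc_zero_ofReal_rpow (by norm_num) hl₀_pos.le]
          norm_num
      _ = _ := by rw [← ENNReal.ofReal_mul (by positivity)]; ring_nf
  have above : ∫⁻ l in Ioi l₀, ν l ^ (1 / 3 : ℝ) ≤
      ENNReal.ofReal (s ^ (2 : ℝ) * l₀ ^ (-1 : ℝ)) := by
    calc ∫⁻ l in Ioi l₀, ν l ^ (1 / 3 : ℝ)
        ≤ ∫⁻ l in Ioi l₀, ENNReal.ofReal (s ^ (2 : ℝ)) * ENNReal.ofReal (l ^ (-2 : ℝ)) :=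
          setLIntegral_mono' measurableSet_Ioi fun l hl =>
            (rpow_le_ofReal_mul_rpow_of_le_div_rpow hs.le (hl₀_pos.trans hl) (by norm_num)
              (h6 l (hl₀_pos.trans hl))).trans_eq (by norm_num)
      _ = ENNReal.ofReal (s ^ (2 : ℝ)) * ENNReal.ofReal (-l₀ ^ (-2 + 1 : ℝ) / (-2 + 1)) := by
          rw [lintegral_const_mul' _ _ ENNReal.ofReal_ne_top,
            lintegral_Ioi_ofReal_rpow (by norm_num) hl₀_pos]
      _ = _ := by rw [← ENNReal.ofReal_mul (by positivity)]; norm_num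
  have h₁ : a ^ (2 / 3 : ℝ) * l₀ ^ (1 / 3 : ℝ) = √(a * s) := by
    rw [hl₀, Real.mul_rpow (by positivity) (by positivity), ← Real.rpow_mul hs.le,
      ← Real.rpow_mul ha.le, mul_left_comm, ← Real.rpow_add ha, Real.sqrt_eq_rpow,
      Real.mul_rpow ha.le hs.le, mul_comm]
    norm_num
  have h₂ : s ^ (2 : ℝ) * l₀ ^ (-1 : ℝ) = √(a * s) := by
    rw [hl₀, Real.mul_rpow (by positivity) (by positivity), ← Real.rpow_mul hs.le,
      ← Real.rpow_mul ha.le, ← mul_assoc, ← Real.rpow_add hs, Real.sqrt_eq_rpow,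
      Real.mul_rpow ha.le hs.le, mul_comm]
    norm_num
  calc ∫⁻ l in Ioi 0, ν l ^ (1 / 3 : ℝ)
      = (∫⁻ l in Ioc 0 l₀, ν l ^ (1 / 3 : ℝ)) + ∫⁻ l in Ioi l₀, ν l ^ (1 / 3 : ℝ) := by
        rw [← Ioc_union_Ioi_eq_Ioi hl₀_pos.le,
          lintegral_union measurableSet_Ioi (Ioc_disjoint_Ioi le_rfl)]
    _ ≤ ENNReal.ofReal (3 * (a ^ (2 / 3 : ℝ) * l₀ ^ (1 / 3 : ℝ)))
        + ENNReal.ofReal (s ^ (2 : ℝ) * l₀ ^ (-1 : ℝ)) := add_le_add below above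
    _ = ENNReal.ofReal (4 * √(a * s)) := by
        rw [h₁, h₂, ← ENNReal.ofReal_add (by positivity) (by positivity)]; ring_nf

lemma meas_lt_abs_le_ofReal_div_rpow {α : Type*} [MeasurableSpace α] {μ : Measure α} {f : α → ℝ}
    {p : ℝ≥0∞} (hp₀ : p ≠ 0) (hp : p ≠ ∞) (hf : MemLp f p μ) {l : ℝ} (hl : 0 < l) :
    μ {x | l < |f x|} ≤ ENNReal.ofReal (((eLpNorm f p μ).toReal / l) ^ p.toReal) := by
  calc μ {x | l < |f x|} ≤ μ {x | ENNReal.ofReal l ≤ ‖f x‖ₑ} :=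
        measure_mono fun x hx => by
          simpa [Real.enorm_eq_ofReal_abs] using ENNReal.ofReal_le_ofReal hx.le
    _ ≤ (ENNReal.ofReal l)⁻¹ ^ p.toReal * eLpNorm f p μ ^ p.toReal :=
        meas_ge_le_mul_pow_eLpNorm_enorm μ hp₀ hp hf.1 (by simpa using hl) (by simp)
    _ = ENNReal.ofReal (((eLpNorm f p μ).toReal / l) ^ p.toReal) := by
        rw [← ENNReal.mul_rpow_of_nonneg _ _ ENNReal.toReal_nonneg,
          ← ENNReal.ofReal_rpow_of_nonneg (by positivity) ENNReal.toReal_nonneg,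
          ENNReal.ofReal_div_of_pos hl, ENNReal.ofReal_toReal hf.eLpNorm_ne_top, div_eq_mul_inv,
          mul_comm]

lemma lintegral_Ioi_meas_lt_abs_rpow_one_third_le {α : Type*} [MeasurableSpace α]
    {μ : Measure α} {f : α → ℝ} (h2 : MemLp f 2 μ) (h6 : MemLp f 6 μ) :
    ∫⁻ l in Ioi 0, μ {x | l < |f x|} ^ (1 / 3 : ℝ) ≤
      ENNReal.ofReal (4 * √((eLpNorm f 2 μ).toReal * (eLpNorm f 6 μ).toReal)) :=
  lintegral_Ioi_rpow_one_third_le ENNReal.toReal_nonneg ENNReal.toReal_nonneg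
    (fun _ hl => by
      simpa using meas_lt_abs_le_ofReal_div_rpow two_ne_zero ENNReal.ofNat_ne_top h2 hl)
    (fun _ hl => by
      simpa using meas_lt_abs_le_ofReal_div_rpow (by norm_num) ENNReal.ofNat_ne_top h6 hl)

lemma lorentz31_sq_le {f : EuclideanSpace ℝ (Fin 3) → ℝ} (h2 : MemLp f 2) (h6 : MemLp f 6) :
    lorentz31 f ^ 2 ≤ 144 * eLpNorm f 2 volume * eLpNorm f 6 volume := by
  calc lorentz31 f ^ 2
      ≤ (3 * ENNReal.ofReal
          (4 * √((eLpNorm f 2 volume).toReal * (eLpNorm f 6 volume).toReal))) ^ 2 := by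
        unfold lorentz31
        gcongr
        exact lintegral_Ioi_meas_lt_abs_rpow_one_third_le h2 h6
    _ = 144 * eLpNorm f 2 volume * eLpNorm f 6 volume := by
        rw [← ENNReal.ofReal_ofNat 3, ← ENNReal.ofReal_mul (by norm_num),
          ← ENNReal.ofReal_pow (by positivity), ← ENNReal.ofReal_toReal h2.eLpNorm_ne_top,
          ← ENNReal.ofReal_toReal h6.eLpNorm_ne_top, ← ENNReal.ofReal_ofNat 144,
          ← ENNReal.ofReal_mul (by norm_num), ← ENNReal.ofReal_mul (by positivity)]
        simp only [ENNReal.toReal_ofReal ENNReal.toReal_nonneg]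
        rw [mul_pow, mul_pow, Real.sq_sqrt (by positivity)]
        ring_nf

section Cutoff

variable {E F : Type*} [NormedAddCommGroup E] [NormedSpace ℝ E]
  [NormedAddCommGroup F] [NormedSpace ℝ F]

variable (E) in
lemma exists_cutoff_norm_fderiv_le [FiniteDimensional ℝ E] :
    ∃ M : ℝ, ∀ R > 0, ∃ ψ : E → ℝ, ContDiff ℝ 1 ψ ∧ HasCompactSupport ψ ∧
      (∀ x, ‖x‖ ≤ R → ψ x = 1) ∧ (∀ x, |ψ x| ≤ 1) ∧ ∀ x, ‖fderiv ℝ ψ x‖ ≤ M / R := by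
  let φ : ContDiffBump (0 : E) := ⟨1, 2, one_pos, one_lt_two⟩
  obtain ⟨M, hM⟩ := (φ.hasCompactSupport.fderiv (𝕜 := ℝ)).exists_bound_of_continuous
    (φ.contDiff (n := 1).continuous_fderiv one_ne_zero)
  refine ⟨M, fun R hR => ⟨fun x => φ (R⁻¹ • x), φ.contDiff.comp (contDiff_const_smul _),
    ?_, ?_, ?_, ?_⟩⟩
  · exact φ.hasCompactSupport.comp_smul (inv_ne_zero hR.ne')
  · intro x hx
    refine φ.one_of_mem_closedBall ?_
    rw [Metric.mem_closedBall, dist_zero_right, norm_smul, Real.norm_of_nonneg (by positivity)]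
    exact inv_mul_le_one_of_le₀ hx hR.le
  · intro x
    rw [abs_of_nonneg φ.nonneg]
    exact φ.le_one
  · intro x
    have hd : HasFDerivAt (fun x => φ (R⁻¹ • x)) (R⁻¹ • fderiv ℝ φ (R⁻¹ • x)) x := by
      have := (φ.contDiff (n := 1).differentiable one_ne_zero (R⁻¹ • x)).hasFDerivAt.comp x
        ((hasFDerivAt_id x).const_smul R⁻¹)
      simpa [Function.comp_def] using this
    rw [hd.fderiv, norm_smul, Real.norm_of_nonneg (by positivity), div_eq_inv_mul]
    exact mul_le_mul_of_nonneg_left (hM _) (by positivity)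

lemma norm_fderiv_smul_le {ψ : E → ℝ} {u : E → F} {x : E} (hψ : DifferentiableAt ℝ ψ x)
    (hu : DifferentiableAt ℝ u x) :
    ‖fderiv ℝ (ψ • u) x‖ ≤ |ψ x| * ‖fderiv ℝ u x‖ + ‖fderiv ℝ ψ x‖ * ‖u x‖ := by
  rw [fderiv_smul hψ hu]
  refine (norm_add_le _ _).trans_eq ?_
  rw [norm_smul, Real.norm_eq_abs, ContinuousLinearMap.norm_smulRight_apply]

lemma eLpNorm_fderiv_smul_le [MeasurableSpace E] {μ : Measure E} {ψ : E → ℝ} {u : E → F}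
    {c : ℝ} {p : ℝ≥0∞} (hp : 1 ≤ p) (hψ : Differentiable ℝ ψ) (hu : Differentiable ℝ u)
    (hψ_le_one : ∀ x, |ψ x| ≤ 1) (hψ_fderiv : ∀ x, ‖fderiv ℝ ψ x‖ ≤ c)
    (hu_meas : AEStronglyMeasurable u μ) (hu_fderiv_meas : AEStronglyMeasurable (fderiv ℝ u) μ) :
    eLpNorm (fderiv ℝ (ψ • u)) p μ ≤
      eLpNorm (fderiv ℝ u) p μ + ENNReal.ofReal c * eLpNorm u p μ := by
  have hc : 0 ≤ c := (norm_nonneg _).trans (hψ_fderiv 0)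
  have pointwise : ∀ x, ‖fderiv ℝ (ψ • u) x‖ ≤ ‖fderiv ℝ u x‖ + c * ‖u x‖ :=
    fun x => (norm_fderiv_smul_le (hψ x) (hu x)).trans <| add_le_add
      (mul_le_of_le_one_left (norm_nonneg _) (hψ_le_one x))
      (mul_le_mul_of_nonneg_right (hψ_fderiv x) (norm_nonneg _))
  calc eLpNorm (fderiv ℝ (ψ • u)) p μ
      ≤ eLpNorm (fun x => ‖fderiv ℝ u x‖ + c * ‖u x‖) p μ := eLpNorm_mono_real pointwise
    _ ≤ eLpNorm (fun x => ‖fderiv ℝ u x‖) p μ + eLpNorm (fun x => c * ‖u x‖) p μ :=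
        eLpNorm_add_le hu_fderiv_meas.norm (hu_meas.norm.const_mul c) hp
    _ = eLpNorm (fderiv ℝ u) p μ + ENNReal.ofReal c * eLpNorm u p μ := by
        rw [eLpNorm_norm, show (fun x => c * ‖u x‖) = c • fun x => ‖u x‖ from rfl,
          eLpNorm_const_smul, eLpNorm_norm, Real.enorm_of_nonneg hc]

end Cutoff

theorem SchwartzMap.eLpNorm_le_eLpNorm_fderiv_of_eq_inner {E F : Type*}
    [NormedAddCommGroup E] [NormedSpace ℝ E] [FiniteDimensional ℝ E] [MeasurableSpace E]
    [BorelSpace E] [NormedAddCommGroup F] [InnerProductSpace ℝ F] (μ : Measure E)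
    [μ.IsAddHaarMeasure] (u : 𝓢(E, F)) {p p' : ℝ≥0} (hp : 1 ≤ p) (hn : 0 < Module.finrank ℝ E)
    (hp' : (p' : ℝ)⁻¹ = p⁻¹ - (Module.finrank ℝ E : ℝ)⁻¹) :
    eLpNorm u p' μ ≤ eLpNormLESNormFDerivOfEqInnerConst μ p * eLpNorm (fderiv ℝ u) p μ := by
  set C := eLpNormLESNormFDerivOfEqInnerConst μ p
  obtain ⟨M, hM⟩ := exists_cutoff_norm_fderiv_le E
  choose ψ hψ_smooth hψ_supp hψ_one hψ_le_one hψ_fderiv using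
    fun n : ℕ => hM (n + 1) n.cast_add_one_pos
  have hu_fderiv_meas : AEStronglyMeasurable (fderiv ℝ u) μ :=
    ((u.smooth 1).continuous_fderiv one_ne_zero).aestronglyMeasurable
  have sobolev_cutoff : ∀ n, eLpNorm (ψ n • ⇑u) p' μ ≤
      C * (eLpNorm (fderiv ℝ u) p μ + ENNReal.ofReal (M / (n + 1)) * eLpNorm u p μ) := fun n =>
    (MeasureTheory.eLpNorm_le_eLpNorm_fderiv_of_eq_inner μ ((hψ_smooth n).smul (u.smooth 1))
      ((hψ_supp n).smul_right) hp hn hp').trans <| by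
      gcongr
      exact eLpNorm_fderiv_smul_le (mod_cast hp) ((hψ_smooth n).differentiable one_ne_zero)
        u.differentiable (hψ_le_one n) (hψ_fderiv n) u.continuous.aestronglyMeasurable
        hu_fderiv_meas
  have cutoff_tendsto : ∀ x, Tendsto (fun n => (ψ n • ⇑u) x) atTop (𝓝 (u x)) := fun x => by
    obtain ⟨N, hN⟩ := exists_nat_ge ‖x‖
    refine tendsto_const_nhds.congr' (eventually_atTop.2 ⟨N, fun n hn => ?_⟩)
    dsimp only
    rw [Pi.smul_apply', hψ_one n x (by linarith [(Nat.cast_le (α := ℝ)).2 hn]), one_smul]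
  have bound_tendsto : Tendsto
      (fun n : ℕ => C * (eLpNorm (fderiv ℝ u) p μ + ENNReal.ofReal (M / (n + 1)) * eLpNorm u p μ))
      atTop (𝓝 (C * eLpNorm (fderiv ℝ u) p μ)) := by
    have hM_div : Tendsto (fun n : ℕ => ENNReal.ofReal (M / (n + 1))) atTop (𝓝 0) := by
      simpa using ENNReal.tendsto_ofReal (tendsto_const_div_atTop_nhds_zero_nat M |>.comp
        (tendsto_add_atTop_nat 1))
    simpa using ENNReal.Tendsto.const_mul
      ((ENNReal.Tendsto.mul_const hM_div (Or.inr (u.eLpNorm_lt_top p μ).ne)).const_add _)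
      (Or.inr ENNReal.coe_ne_top)
  calc eLpNorm u p' μ ≤ atTop.liminf fun n => eLpNorm (ψ n • ⇑u) p' μ :=
        Lp.eLpNorm_lim_le_liminf_eLpNorm
          (fun n => ((hψ_smooth n).continuous.smul u.continuous).aestronglyMeasurable) u
          (ae_of_all _ cutoff_tendsto)
    _ ≤ atTop.liminf fun n : ℕ =>
          C * (eLpNorm (fderiv ℝ u) p μ + ENNReal.ofReal (M / (n + 1)) * eLpNorm u p μ) :=
        liminf_le_liminf (Eventually.of_forall sobolev_cutoff)
    _ = C * eLpNorm (fderiv ℝ u) p μ := bound_tendsto.liminf_eq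

theorem stmt_13 :
    ∃ C : ℝ, 0 < C ∧
      ∀ z : SchwartzMap (EuclideanSpace ℝ (Fin 3)) ℝ,
        lorentz31 (⇑z) ^ 2 ≤
          ENNReal.ofReal C * eLpNorm (⇑z) 2 volume *
            eLpNorm (fun y => ‖fderiv ℝ (⇑z) y‖) 2 volume := by
  set K := eLpNormLESNormFDerivOfEqInnerConst (volume : Measure (EuclideanSpace ℝ (Fin 3))) 2
  refine ⟨144 * (K + 1), by positivity, fun z => ?_⟩
  have sobolev : eLpNorm z 6 volume ≤ K * eLpNorm (fderiv ℝ z) 2 volume := by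
    simpa using z.eLpNorm_le_eLpNorm_fderiv_of_eq_inner volume (p := 2) (p' := 6) one_le_two
      (by simp) (by norm_num)
  calc lorentz31 z ^ 2 ≤ 144 * eLpNorm z 2 volume * eLpNorm z 6 volume :=
        lorentz31_sq_le (z.memLp 2) (z.memLp 6)
    _ ≤ 144 * eLpNorm z 2 volume * (K * eLpNorm (fderiv ℝ z) 2 volume) := by gcongr
    _ = 144 * K * (eLpNorm z 2 volume * eLpNorm (fderiv ℝ z) 2 volume) := by ring
    _ ≤ ENNReal.ofReal (144 * (K + 1)) *
          (eLpNorm z 2 volume * eLpNorm (fderiv ℝ z) 2 volume) := by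
        rw [ENNReal.ofReal_mul (by norm_num), ENNReal.ofReal_ofNat, ← ENNReal.ofReal_coe_nnreal]
        gcongr
        linarith
    _ = ENNReal.ofReal (144 * (K + 1)) * eLpNorm z 2 volume *
          eLpNorm (fun y => ‖fderiv ℝ z y‖) 2 volume := by
        rw [eLpNorm_norm, mul_assoc]
end

section
/- (Critical Lorentz embedding) There exists C > 0 such that for every z in the Schwartz space on ℝ³, ‖z‖_{L^∞(ℝ³)} ≤ C·‖∇z‖_{L^{3,1}(ℝ³)}. -/
open MeasureTheory Set Metric Filter Topology
open scoped ENNReal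

theorem setLIntegral_le_setLIntegral_of_measure_eq {α : Type*} [MeasurableSpace α]
    {μ : Measure α} {k : α → ℝ≥0∞} {A B : Set α} {c : ℝ≥0∞} (hk : Measurable k)
    (hA : MeasurableSet A) (hB : MeasurableSet B) (hAB : μ A = μ B) (hA_fin : μ A ≠ ⊤)
    (h_out : ∀ y ∈ A \ B, k y ≤ c) (h_in : ∀ y ∈ B \ A, c ≤ k y) :
    ∫⁻ y in A, k y ∂μ ≤ ∫⁻ y in B, k y ∂μ := by
  have h_diff : μ (A \ B) = μ (B \ A) := by
    have hAB_fin : μ (A ∩ B) ≠ ⊤ := measure_ne_top_of_subset inter_subset_left hA_fin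
    refine (ENNReal.add_right_inj hAB_fin).1 ?_
    rw [measure_inter_add_sdiff A hB, inter_comm, measure_inter_add_sdiff B hA, hAB]
  rw [← lintegral_inter_add_sdiff k A hB, ← lintegral_inter_add_sdiff k B hA, inter_comm B A]
  refine add_le_add le_rfl ?_
  calc ∫⁻ y in A \ B, k y ∂μ ≤ ∫⁻ _ in A \ B, c ∂μ := setLIntegral_mono measurable_const h_out
    _ = ∫⁻ _ in B \ A, c ∂μ := by rw [setLIntegral_const, setLIntegral_const, h_diff]
    _ ≤ ∫⁻ y in B \ A, k y ∂μ := setLIntegral_mono hk h_in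

theorem enorm_le_lintegral_Ioi_fderiv {E F : Type*} [NormedAddCommGroup E] [NormedSpace ℝ E]
    [ProperSpace E] [NormedAddCommGroup F] [NormedSpace ℝ F] [CompleteSpace F] {f : E → F}
    (hf : ContDiff ℝ 1 f) (hf0 : Tendsto f (cocompact E) (𝓝 0)) (x : E) {e : E} (he : ‖e‖ = 1) :
    ‖f x‖ₑ ≤ ∫⁻ t in Ioi (0 : ℝ), ‖fderiv ℝ f (x + t • e)‖ₑ := by
  by_cases h_top : ∫⁻ t in Ioi (0 : ℝ), ‖fderiv ℝ f (x + t • e)‖ₑ = ⊤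
  · exact h_top ▸ le_top
  have h_deriv : ∀ t ∈ Ici (0 : ℝ),
      HasDerivAt (fun t : ℝ ↦ f (x + t • e)) (fderiv ℝ f (x + t • e) e) t := fun t _ ↦ by
    have h_line : HasDerivAt (fun t : ℝ ↦ x + t • e) e t := by
      simpa using ((hasDerivAt_id t).smul_const e).const_add x
    exact ((hf.differentiable one_ne_zero) (x + t • e)).hasFDerivAt.comp_hasDerivAt t h_line
  have h_le : ∀ t : ℝ, ‖fderiv ℝ f (x + t • e) e‖ₑ ≤ ‖fderiv ℝ f (x + t • e)‖ₑ := fun t ↦ by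
    have he' : ‖e‖ₑ = 1 := by rw [← ofReal_norm, he, ENNReal.ofReal_one]
    simpa [he'] using (fderiv ℝ f (x + t • e)).le_opENorm e
  have h_cont : Continuous fun t : ℝ ↦ fderiv ℝ f (x + t • e) e :=
    by have := hf.continuous_fderiv one_ne_zero; fun_prop
  have h_int : IntegrableOn (fun t : ℝ ↦ fderiv ℝ f (x + t • e) e) (Ioi 0) :=
    ⟨h_cont.aestronglyMeasurable, (lintegral_mono h_le).trans_lt (lt_top_iff_ne_top.2 h_top)⟩
  have h_ray : Tendsto (fun t : ℝ ↦ x + t • e) atTop (cocompact E) := by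
    rw [← cobounded_eq_cocompact, ← tendsto_norm_atTop_iff_cobounded]
    refine tendsto_atTop_mono (fun t ↦ ?_) (tendsto_atTop_add_const_right _ (-‖x‖) tendsto_id)
    have h_tri := norm_sub_le (x + t • e) x
    rw [add_sub_cancel_left, norm_smul, he, mul_one] at h_tri
    linarith [Real.le_norm_self t, show id t = t from rfl]
  have h_ftc := integral_Ioi_of_hasDerivAt_of_tendsto' h_deriv h_int (hf0.comp h_ray)
  rw [zero_sub, zero_smul, add_zero] at h_ftc
  calc ‖f x‖ₑ = ‖∫ t in Ioi (0 : ℝ), fderiv ℝ f (x + t • e) e‖ₑ := by rw [h_ftc, enorm_neg]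
    _ ≤ _ := (enorm_integral_le_lintegral_enorm _).trans (lintegral_mono h_le)

section RieszPotential

variable {E : Type*} [NormedAddCommGroup E] [NormedSpace ℝ E]

noncomputable def rieszKernel (y : E) : ℝ≥0∞ :=
  (ENNReal.ofReal (‖y‖ ^ (Module.finrank ℝ E - 1)))⁻¹

theorem measurable_rieszKernel [MeasurableSpace E] [BorelSpace E] :
    Measurable (rieszKernel : E → ℝ≥0∞) := by
  unfold rieszKernel; fun_prop

theorem ofReal_pow_mul_rieszKernel_smul {t : ℝ} (ht : 0 < t) {e : E} (he : ‖e‖ = 1) :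
    ENNReal.ofReal (t ^ (Module.finrank ℝ E - 1)) * rieszKernel (t • e) = 1 := by
  rw [rieszKernel, norm_smul, he, mul_one, Real.norm_of_nonneg ht.le]
  exact ENNReal.mul_inv_cancel (ENNReal.ofReal_pos.2 (by positivity)).ne' ENNReal.ofReal_ne_top

variable [FiniteDimensional ℝ E] [MeasurableSpace E] [BorelSpace E] [Nontrivial E]
  (μ : Measure E) [μ.IsAddHaarMeasure]

theorem lintegral_eq_lintegral_sphere_lintegral_Ioi (g : E → ℝ≥0∞) (hg : Measurable g) :
    ∫⁻ y, g y ∂μ = ∫⁻ e : sphere (0 : E) 1, (∫⁻ t in Ioi (0 : ℝ),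
      ENNReal.ofReal (t ^ (Module.finrank ℝ E - 1)) * g (t • (e : E))) ∂μ.toSphere := by
  have hmeas : Measurable fun p : sphere (0 : E) 1 × Ioi (0 : ℝ) ↦ g ((p.2 : ℝ) • (p.1 : E)) :=
    hg.comp (by fun_prop)
  calc ∫⁻ y, g y ∂μ = ∫⁻ y : ({0}ᶜ : Set E), g y ∂μ.comap Subtype.val := by
        rw [lintegral_subtype_comap (measurableSet_singleton 0).compl, restrict_compl_singleton]
    _ = ∫⁻ p : sphere (0 : E) 1 × Ioi (0 : ℝ), g ((p.2 : ℝ) • (p.1 : E))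
          ∂μ.toSphere.prod (Measure.volumeIoiPow (Module.finrank ℝ E - 1)) := by
        rw [← (Measure.measurePreserving_homeomorphUnitSphereProd μ).lintegral_comp hmeas]
        refine lintegral_congr fun y ↦ ?_
        simp [homeomorphUnitSphereProd, smul_inv_smul₀ (norm_ne_zero_iff.2 y.2)]
    _ = _ := by
        rw [lintegral_prod _ hmeas.aemeasurable]
        refine lintegral_congr fun e ↦ ?_
        rw [Measure.volumeIoiPow,
          lintegral_withDensity_eq_lintegral_mul _ (by fun_prop) (by fun_prop),
          ← lintegral_subtype_comap measurableSet_Ioi]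
        rfl

theorem setLIntegral_ball_rieszKernel (r : ℝ) :
    ∫⁻ y in ball (0 : E) r, rieszKernel y ∂μ = μ.toSphere univ * ENNReal.ofReal r := by
  have h_ray : ∀ e : sphere (0 : E) 1, ∀ t ∈ Ioi (0 : ℝ),
      ENNReal.ofReal (t ^ (Module.finrank ℝ E - 1)) *
        (ball (0 : E) r).indicator rieszKernel (t • (e : E)) = (Iio r).indicator 1 t := by
    intro e t ht
    have he : ‖(e : E)‖ = 1 := mem_sphere_zero_iff_norm.1 e.2
    have h_mem : t • (e : E) ∈ ball (0 : E) r ↔ t ∈ Iio r := by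
      rw [mem_ball_zero_iff, norm_smul, he, mul_one, Real.norm_of_nonneg (le_of_lt ht), mem_Iio]
    by_cases htr : t ∈ Iio r
    · rw [indicator_of_mem (h_mem.2 htr), indicator_of_mem htr,
        ofReal_pow_mul_rieszKernel_smul ht he, Pi.one_apply]
    · rw [indicator_of_notMem (mt h_mem.1 htr), indicator_of_notMem htr, mul_zero]
  rw [← lintegral_indicator measurableSet_ball, lintegral_eq_lintegral_sphere_lintegral_Ioi μ _
    (measurable_rieszKernel.indicator measurableSet_ball)]
  have h_inner : ∀ e : sphere (0 : E) 1, ∫⁻ t in Ioi (0 : ℝ),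
      ENNReal.ofReal (t ^ (Module.finrank ℝ E - 1)) *
        (ball (0 : E) r).indicator rieszKernel (t • (e : E)) = ENNReal.ofReal r := fun e ↦ by
    rw [setLIntegral_congr_fun measurableSet_Ioi (h_ray e), lintegral_indicator_one
      measurableSet_Iio, Measure.restrict_apply measurableSet_Iio, Iio_inter_Ioi, Real.volume_Ioo,
      sub_zero]
  simp_rw [h_inner, lintegral_const, mul_comm]

theorem setLIntegral_rieszKernel_le {A : Set E} (hA : MeasurableSet A) :
    ∫⁻ y in A, rieszKernel y ∂μ ≤
      μ.toSphere univ * (μ A / μ (ball 0 1)) ^ (Module.finrank ℝ E : ℝ)⁻¹ := by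
  set n := Module.finrank ℝ E
  have hn : (0 : ℝ) < n := Nat.cast_pos.2 Module.finrank_pos
  have hv : μ (ball 0 1) ≠ 0 := (measure_ball_pos μ 0 one_pos).ne'
  have hv_fin : μ (ball 0 1) ≠ ⊤ := measure_ball_lt_top.ne
  by_cases hA_fin : μ A = ⊤
  · rw [hA_fin, ENNReal.top_div_of_ne_top hv_fin, ENNReal.top_rpow_of_pos (inv_pos.2 hn),
      ENNReal.mul_top (Measure.measure_univ_ne_zero.2 μ.toSphere_ne_zero)]
    exact le_top
  set r := (μ A / μ (ball 0 1)).toReal ^ (n : ℝ)⁻¹ with hr_def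
  have hr : 0 ≤ r := by positivity
  have h_ratio_fin : μ A / μ (ball 0 1) ≠ ⊤ := ENNReal.div_ne_top hA_fin hv
  have h_ball : μ (ball 0 r) = μ A := by
    rw [Measure.addHaar_ball μ 0 hr, ← Real.rpow_natCast, ← Real.rpow_mul ENNReal.toReal_nonneg,
      inv_mul_cancel₀ hn.ne', Real.rpow_one, ENNReal.ofReal_toReal h_ratio_fin,
      ENNReal.div_mul_cancel hv hv_fin]
  have h_radius : ENNReal.ofReal r = (μ A / μ (ball 0 1)) ^ (n : ℝ)⁻¹ := by
    rw [hr_def, ENNReal.toReal_rpow, ENNReal.ofReal_toReal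
      (ENNReal.rpow_ne_top_of_nonneg (by positivity) h_ratio_fin)]
  calc ∫⁻ y in A, rieszKernel y ∂μ ≤ ∫⁻ y in ball 0 r, rieszKernel y ∂μ := by
        refine setLIntegral_le_setLIntegral_of_measure_eq measurable_rieszKernel hA
          measurableSet_ball h_ball.symm hA_fin (c := (ENNReal.ofReal (r ^ (n - 1)))⁻¹) ?_ ?_
        · intro y hy
          have : r ≤ ‖y‖ := by simpa using hy.2
          exact ENNReal.inv_le_inv.2 (ENNReal.ofReal_le_ofReal (by gcongr))
        · intro y hy
          have : ‖y‖ < r := by simpa using hy.1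
          exact ENNReal.inv_le_inv.2 (ENNReal.ofReal_le_ofReal (by gcongr))
    _ = _ := by rw [setLIntegral_ball_rieszKernel, h_radius]

theorem toSphere_mul_enorm_le_lintegral_fderiv_mul_rieszKernel {F : Type*} [NormedAddCommGroup F]
    [NormedSpace ℝ F] [CompleteSpace F] {f : E → F} (hf : ContDiff ℝ 1 f)
    (hf0 : Tendsto f (cocompact E) (𝓝 0)) (x : E) :
    μ.toSphere univ * ‖f x‖ₑ ≤ ∫⁻ y, ‖fderiv ℝ f (x + y)‖ₑ * rieszKernel y ∂μ := by
  have h_meas : Measurable fun y ↦ ‖fderiv ℝ f (x + y)‖ₑ * rieszKernel y :=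
    ((hf.continuous_fderiv one_ne_zero).comp (continuous_const_add x)).enorm.measurable.mul
      measurable_rieszKernel
  rw [lintegral_eq_lintegral_sphere_lintegral_Ioi μ _ h_meas, mul_comm, ← lintegral_const]
  refine lintegral_mono fun e ↦ ?_
  have he : ‖(e : E)‖ = 1 := mem_sphere_zero_iff_norm.1 e.2
  refine (enorm_le_lintegral_Ioi_fderiv hf hf0 x he).trans_eq
    (setLIntegral_congr_fun measurableSet_Ioi fun t ht ↦ ?_)
  rw [mul_left_comm, ofReal_pow_mul_rieszKernel_smul ht he, mul_one]

theorem lintegral_ofReal_mul_rieszKernel_le {g : E → ℝ} (hg0 : 0 ≤ g) (hg : Measurable g) :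
    ∫⁻ y, ENNReal.ofReal (g y) * rieszKernel y ∂μ ≤
      μ.toSphere univ * (μ (ball 0 1) ^ (Module.finrank ℝ E : ℝ)⁻¹)⁻¹ *
        ∫⁻ l in Ioi (0 : ℝ), μ {y | l < g y} ^ (Module.finrank ℝ E : ℝ)⁻¹ := by
  have hv : μ (ball 0 1) ≠ 0 := (measure_ball_pos μ 0 one_pos).ne'
  have h_const : μ.toSphere univ * (μ (ball 0 1) ^ (Module.finrank ℝ E : ℝ)⁻¹)⁻¹ ≠ ⊤ :=
    ENNReal.mul_ne_top (measure_ne_top _ _) (ENNReal.inv_ne_top.2 (by positivity))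
  calc ∫⁻ y, ENNReal.ofReal (g y) * rieszKernel y ∂μ
      = ∫⁻ y, ENNReal.ofReal (g y) ∂μ.withDensity rieszKernel := by
        rw [lintegral_withDensity_eq_lintegral_mul _ measurable_rieszKernel hg.ennreal_ofReal]
        exact lintegral_congr fun y ↦ mul_comm _ _
    _ = ∫⁻ l in Ioi (0 : ℝ), μ.withDensity rieszKernel {y | l < g y} :=
        lintegral_eq_lintegral_meas_lt _ (ae_of_all _ hg0) hg.aemeasurable
    _ ≤ ∫⁻ l in Ioi (0 : ℝ), μ.toSphere univ * (μ {y | l < g y} / μ (ball 0 1)) ^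
          (Module.finrank ℝ E : ℝ)⁻¹ := by
        refine lintegral_mono fun l ↦ ?_
        have hl : MeasurableSet {y | l < g y} := measurableSet_lt measurable_const hg
        rw [withDensity_apply _ hl]
        exact setLIntegral_rieszKernel_le μ hl
    _ = ∫⁻ l in Ioi (0 : ℝ), μ.toSphere univ * (μ (ball 0 1) ^ (Module.finrank ℝ E : ℝ)⁻¹)⁻¹ *
          μ {y | l < g y} ^ (Module.finrank ℝ E : ℝ)⁻¹ := by
        refine lintegral_congr fun l ↦ ?_
        rw [ENNReal.div_rpow_of_nonneg _ _ (by positivity), div_eq_mul_inv,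
          mul_comm (μ _ ^ _), mul_assoc]
    _ = _ := lintegral_const_mul' _ _ h_const

theorem enorm_le_lintegral_meas_lt_fderiv_rpow {F : Type*} [NormedAddCommGroup F]
    [NormedSpace ℝ F] [CompleteSpace F] {f : E → F} (hf : ContDiff ℝ 1 f)
    (hf0 : Tendsto f (cocompact E) (𝓝 0)) (x : E) :
    ‖f x‖ₑ ≤ (μ (ball 0 1) ^ (Module.finrank ℝ E : ℝ)⁻¹)⁻¹ *
      ∫⁻ l in Ioi (0 : ℝ), μ {y | l < ‖fderiv ℝ f y‖} ^ (Module.finrank ℝ E : ℝ)⁻¹ := by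
  have h_translate : ∀ l : ℝ, μ {y | l < ‖fderiv ℝ f (x + y)‖} = μ {y | l < ‖fderiv ℝ f y‖} :=
    fun l ↦ measure_preimage_add μ x {y | l < ‖fderiv ℝ f y‖}
  have h := (toSphere_mul_enorm_le_lintegral_fderiv_mul_rieszKernel μ hf hf0 x).trans_eq
    (by simp_rw [← ofReal_norm]) |>.trans <| lintegral_ofReal_mul_rieszKernel_le μ
      (g := fun y ↦ ‖fderiv ℝ f (x + y)‖) (fun _ ↦ norm_nonneg _)
      ((hf.continuous_fderiv one_ne_zero).comp (continuous_const_add x)).norm.measurable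
  simp_rw [h_translate, mul_assoc] at h
  exact (ENNReal.mul_le_mul_iff_right (Measure.measure_univ_ne_zero.2 μ.toSphere_ne_zero)
    (measure_ne_top _ _)).1 h

end RieszPotential

theorem stmt_14 :
    ∃ C : ℝ, 0 < C ∧
      ∀ z : SchwartzMap (EuclideanSpace ℝ (Fin 3)) ℝ, ∀ x,
        ENNReal.ofReal |z x| ≤
          ENNReal.ofReal C * lorentz31 (fun y => ‖fderiv ℝ (⇑z) y‖) := by
  set c := (volume (ball (0 : EuclideanSpace ℝ (Fin 3)) 1) ^ (3 : ℝ)⁻¹)⁻¹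
  have hc : c ≠ ⊤ := ENNReal.inv_ne_top.2 (ENNReal.rpow_pos (measure_ball_pos _ _ one_pos)
    measure_ball_lt_top.ne).ne'
  have hc0 : c ≠ 0 := ENNReal.inv_ne_zero.2 (ENNReal.rpow_ne_top_of_nonneg (by norm_num)
    measure_ball_lt_top.ne)
  refine ⟨c.toReal, ENNReal.toReal_pos hc0 hc, fun z x ↦ ?_⟩
  have h := enorm_le_lintegral_meas_lt_fderiv_rpow volume (z.smooth 1) z.tendsto_cocompact x
  rw [finrank_euclideanSpace_fin, Nat.cast_ofNat] at h
  rw [← Real.enorm_eq_ofReal_abs, ENNReal.ofReal_toReal hc, lorentz31, one_div]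
  simp_rw [abs_norm]
  exact h.trans (mul_le_mul_right (le_mul_of_one_le_left' (by norm_num : (1 : ℝ≥0∞) ≤ 3)) c)
end
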